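/- arXiv:2011.00589 — 7 statements merged into one kernel-verified Lean document; each statement's English description precedes it below -/
import Mathlib

section
/- Let X be a compact topological space and let d : X × X → ℝ be a lower semicontinuous metric on X. Then for every x ∈ X and every open set U containing x there exists ε > 0 such that the closed ball {y ∈ X : d(x,y) ≤ ε} is contained in U. (In particular, on a compact space a lower semicontinuous metric automatically refines the topology.) -/
/-- On a compact space, a lower semicontinuous metric automatically refines the topology:
for every point `x` and open `U ∋ x` there is `ε > 0` with the closed `d`-ball of radius `ε`
around `x` contained in `U`. -/
theorem lsc_metric_closed_ball_subset_of_compact {X : Type*} [TopologicalSpace X]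
    [CompactSpace X] (d : X → X → ℝ)
    (h_eq : ∀ x y, d x y = 0 ↔ x = y)
    (h_symm : ∀ x y, d x y = d y x)
    (h_tri : ∀ x y z, d x z ≤ d x y + d y z)
    (h_lsc : ∀ r : ℝ, IsOpen {p : X × X | r < d p.1 p.2}) :
    ∀ x : X, ∀ U : Set X, IsOpen U → x ∈ U → ∃ ε > 0, {y : X | d x y ≤ ε} ⊆ U := by
  intro x U hU hxU
  have hnonneg : ∀ y : X, 0 ≤ d x y := by
    intro y
    have h1 : d x x ≤ d x y + d y x := h_tri x y x
    have h2 : d x x = 0 := (h_eq x x).2 rfl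
    have h3 : d y x = d x y := h_symm y x
    linarith
  have hpos : ∀ y : X, y ∈ Uᶜ → 0 < d x y := by
    intro y hy
    rcases lt_or_eq_of_le (hnonneg y) with h | h
    · exact h
    · exfalso
      have : x = y := (h_eq x y).1 h.symm
      exact hy (this ▸ hxU)
  -- open sets indexed by points of Uᶜ
  have hopen : ∀ y : (Uᶜ : Set X), IsOpen {z : X | d x (y : X) / 2 < d x z} := by
    intro y
    have : {z : X | d x (y : X) / 2 < d x z} =
        (fun z : X => ((x, z) : X × X)) ⁻¹' {p : X × X | d x (y : X) / 2 < d p.1 p.2} := rfl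
    rw [this]
    exact (h_lsc _).preimage (by continuity)
  have hcover : Uᶜ ⊆ ⋃ y : (Uᶜ : Set X), {z : X | d x (y : X) / 2 < d x z} := by
    intro y hy
    exact Set.mem_iUnion.2 ⟨⟨y, hy⟩, by simpa using half_lt_self (hpos y hy)⟩
  have hKc : IsCompact (Uᶜ : Set X) := hU.isClosed_compl.isCompact
  obtain ⟨t, ht⟩ := hKc.elim_finite_subcover _ hopen hcover
  rcases Set.eq_empty_or_nonempty (Uᶜ : Set X) with hKe | hKne
  · exact ⟨1, one_pos, fun y _ => by
      by_contra hyU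
      exact (Set.eq_empty_iff_forall_notMem.1 hKe y) hyU⟩
  · obtain ⟨y0, hy0⟩ := hKne
    have htne : t.Nonempty := by
      rcases Set.mem_iUnion₂.1 (ht hy0) with ⟨i, hi, _⟩
      exact ⟨i, hi⟩
    set ε := t.inf' htne (fun y => d x (y : X) / 2) with hε
    refine ⟨ε, ?_, ?_⟩
    · rw [hε]
      apply (Finset.lt_inf'_iff htne).2
      intro y _
      exact half_pos (hpos y y.2)
    · intro y hy
      by_contra hyU
      rcases Set.mem_iUnion₂.1 (ht hyU) with ⟨i, hit, hiy⟩
      have hle : ε ≤ d x (i : X) / 2 := Finset.inf'_le _ hit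
      have : d x (i : X) / 2 < d x y := hiy
      have hyε : d x y ≤ ε := hy
      linarith
end

section
/- If X is a compact topometric space with metric d, then every continuous function f : X → ℝ is uniformly continuous with respect to d: for every ε > 0 there exists δ > 0 such that for all x, y ∈ X, if d(x,y) < δ then |f(x) − f(y)| < ε. -/
/-- On a compact topometric space, every continuous real-valued function is uniformly
continuous with respect to the metric `d`. -/
theorem continuous_uniformly_continuous_of_compact_topometric {X : Type*} [TopologicalSpace X]
    [CompactSpace X] (d : X → X → ℝ)
    (h_eq : ∀ x y, d x y = 0 ↔ x = y)
    (h_symm : ∀ x y, d x y = d y x)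
    (h_tri : ∀ x y z, d x z ≤ d x y + d y z)
    (h_lsc : ∀ r : ℝ, IsOpen {p : X × X | r < d p.1 p.2})
    (h_ref : ∀ U : Set X, IsOpen U → ∀ x ∈ U, ∃ ε > 0, {y | d x y < ε} ⊆ U)
    (f : X → ℝ) (hf : Continuous f) :
    ∀ ε > 0, ∃ δ > 0, ∀ x y : X, d x y < δ → |f x - f y| < ε := by
  intro ε hε
  set K : Set (X × X) := {p | ε ≤ |f p.1 - f p.2|} with hK
  have hKc : IsCompact K := by
    have hcl : IsClosed K := by
      have : Continuous fun p : X × X => |f p.1 - f p.2| :=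
        ((hf.comp continuous_fst).sub (hf.comp continuous_snd)).abs
      exact isClosed_le continuous_const this
    exact hcl.isCompact
  -- every point of K has positive d
  have hKpos : ∀ p ∈ K, 0 < d p.1 p.2 := by
    intro p hp
    have hnn : 0 ≤ d p.1 p.2 := by
      have h1 := h_tri p.1 p.2 p.1
      have h0 : d p.1 p.1 = 0 := (h_eq p.1 p.1).2 rfl
      have h2 := h_symm p.2 p.1
      linarith
    rcases lt_or_eq_of_le hnn with h | h
    · exact h
    · exfalso
      have : p.1 = p.2 := (h_eq p.1 p.2).1 h.symm
      have : |f p.1 - f p.2| = 0 := by rw [this]; simp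
      have := hp
      simp only [hK, Set.mem_setOf_eq] at this
      linarith
  have hcov : K ⊆ ⋃ n : ℕ, {p : X × X | (n + 1 : ℝ)⁻¹ < d p.1 p.2} := by
    intro p hp
    obtain ⟨n, hn⟩ := exists_nat_one_div_lt (hKpos p hp)
    exact Set.mem_iUnion.2 ⟨n, by simpa [one_div] using hn⟩
  have hdir : Directed (· ⊆ ·) fun n : ℕ => {p : X × X | (n + 1 : ℝ)⁻¹ < d p.1 p.2} := by
    intro m n
    refine ⟨max m n, fun p hp => ?_, fun p hp => ?_⟩ <;>
      { simp only [Set.mem_setOf_eq] at hp ⊢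
        refine lt_of_le_of_lt (inv_anti₀ (by positivity) ?_) hp <;> push_cast <;>
          simp [le_max_left, le_max_right] }
  obtain ⟨n, hn⟩ := hKc.elim_directed_cover _ (fun n => h_lsc _) hcov hdir
  refine ⟨(n + 1 : ℝ)⁻¹, by positivity, fun x y hxy => ?_⟩
  by_contra h
  have : (x, y) ∈ K := by simp only [hK, Set.mem_setOf_eq]; linarith [not_lt.1 h]
  exact absurd hxy (not_lt.2 (le_of_lt (hn this)))
end

section
/- Let X be a compact topometric space with metric d, let F ⊆ X be a closed set, and let x ∈ F. Then x is d-atomic-in-F if and only if there exists a continuous function f : X → ℝ such that f(x) = 0 and min(d(x,y), 1) ≤ f(y) for all y ∈ F. -/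
/-- In a compact topometric space, a point `x` of a closed set `F` is `d`-atomic-in-`F`
(i.e. for every `ε > 0`, `x` lies in the interior, in the subspace topology on `F`, of the
closed `ε`-ball around `x` intersected with `F`) if and only if there is a continuous
function `f : X → ℝ` with `f x = 0` and `min (d x y) 1 ≤ f y` for all `y ∈ F`. -/
theorem d_atomic_in_iff_continuous_witness {X : Type*} [TopologicalSpace X]
    [CompactSpace X] (d : X → X → ℝ)
    (h_eq : ∀ x y, d x y = 0 ↔ x = y)
    (h_symm : ∀ x y, d x y = d y x)
    (h_tri : ∀ x y z, d x z ≤ d x y + d y z)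
    (h_lsc : ∀ r : ℝ, IsOpen {p : X × X | r < d p.1 p.2})
    (h_ref : ∀ U : Set X, IsOpen U → ∀ x ∈ U, ∃ ε > 0, {y | d x y < ε} ⊆ U)
    (F : Set X) (hF : IsClosed F) (x : X) (hxF : x ∈ F) :
    (∀ ε > 0, (⟨x, hxF⟩ : F) ∈ interior {y : F | d x (y : X) ≤ ε}) ↔
      ∃ f : X → ℝ, Continuous f ∧ f x = 0 ∧ ∀ y ∈ F, min (d x y) 1 ≤ f y := by
  classical
  have hd_nonneg : ∀ a b, 0 ≤ d a b := by
    intro a b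
    have h0 : d a a = 0 := (h_eq a a).2 rfl
    have h1 := h_tri a b a
    have h2 := h_symm b a
    nlinarith
  constructor
  · intro hat
    -- X is Hausdorff
    haveI : T2Space X := by
      constructor
      intro a b hab
      have hr : 0 < d a b :=
        lt_of_le_of_ne (hd_nonneg a b) (fun h => hab ((h_eq a b).1 h.symm))
      have hopen := h_lsc (d a b / 2)
      have hmem : (a, b) ∈ {p : X × X | d a b / 2 < d p.1 p.2} := by
        simp only [Set.mem_setOf_eq]; linarith
      rcases isOpen_prod_iff.1 hopen a b hmem with ⟨U, V, hU, hV, haU, hbV, hUV⟩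
      refine ⟨U, V, hU, hV, haU, hbV, Set.disjoint_left.2 fun z hzU hzV => ?_⟩
      have : d a b / 2 < d z z := hUV (Set.mk_mem_prod hzU hzV)
      rw [(h_eq z z).2 rfl] at this
      linarith
    -- open neighborhoods from atomicity
    have hW : ∀ n : ℕ, ∃ W : Set X, IsOpen W ∧ x ∈ W ∧
        ∀ y ∈ F, y ∈ W → d x y ≤ (1/2 : ℝ) ^ (n + 1) := by
      intro n
      have h := hat ((1/2 : ℝ) ^ (n + 1)) (by positivity)
      rcases mem_interior.1 h with ⟨t, hts, hto, hxt⟩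
      rcases isOpen_induced_iff.1 hto with ⟨W, hWo, hWt⟩
      refine ⟨W, hWo, ?_, ?_⟩
      · have : (⟨x, hxF⟩ : F) ∈ (Subtype.val ⁻¹' W : Set F) := hWt ▸ hxt
        exact this
      · intro y hyF hyW
        have : (⟨y, hyF⟩ : F) ∈ t := by rw [← hWt]; exact hyW
        exact hts this
    choose W hWo hxW hWd using hW
    -- Urysohn functions
    have hg : ∀ n : ℕ, ∃ g : C(X, ℝ), g x = 0 ∧ (∀ y, y ∉ W n → g y = 1) ∧
        ∀ y, g y ∈ Set.Icc (0:ℝ) 1 := by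
      intro n
      have hdisj : Disjoint ({x} : Set X) (W n)ᶜ := by
        simp [Set.disjoint_left, hxW n]
      rcases exists_continuous_zero_one_of_isClosed isClosed_singleton
        (hWo n).isClosed_compl hdisj with ⟨g, hg0, hg1, hg01⟩
      exact ⟨g, hg0 rfl, fun y hy => hg1 hy, hg01⟩
    choose g hg0 hg1 hg01 using hg
    -- the witness function
    set c : ℕ → ℝ := fun n => (1/2 : ℝ) ^ (n + 1) with hc
    have hc_pos : ∀ n, 0 < c n := fun n => by positivity
    have hc_sum : Summable c := by
      have : Summable (fun n : ℕ => (1/2 : ℝ) ^ n) :=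
        summable_geometric_of_lt_one (by norm_num) (by norm_num)
      simpa [hc, pow_succ, mul_comm] using this.mul_right (1/2 : ℝ)
    have hterm_sum : ∀ y, Summable (fun n => c n * g n y) := by
      intro y
      refine Summable.of_nonneg_of_le (fun n => ?_) (fun n => ?_) hc_sum
      · exact mul_nonneg (hc_pos n).le (hg01 n y).1
      · calc c n * g n y ≤ c n * 1 :=
              mul_le_mul_of_nonneg_left (hg01 n y).2 (hc_pos n).le
          _ = c n := mul_one _
    refine ⟨fun y => ∑' n, c n * g n y, ?_, ?_, ?_⟩
    · refine continuous_tsum (fun n => ?_) hc_sum (fun n y => ?_)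
      · exact continuous_const.mul (g n).continuous
      · rw [Real.norm_eq_abs, abs_mul, abs_of_pos (hc_pos n),
          abs_of_nonneg (hg01 n y).1]
        calc c n * g n y ≤ c n * 1 :=
              mul_le_mul_of_nonneg_left (hg01 n y).2 (hc_pos n).le
          _ = c n := mul_one _
    · simp [hg0]
    · intro y hyF
      rcases eq_or_lt_of_le (hd_nonneg x y) with hd0 | hd0
      · have : min (d x y) 1 ≤ 0 := by rw [← hd0]; exact min_le_left _ _
        exact this.trans (tsum_nonneg fun n =>
          mul_nonneg (hc_pos n).le (hg01 n y).1)
      · -- find minimal N with c N < d x y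
        have hex : ∃ n : ℕ, c n < d x y := by
          rcases exists_pow_lt_of_lt_one hd0 (by norm_num : (1/2 : ℝ) < 1)
            with ⟨n, hn⟩
          refine ⟨n, lt_of_le_of_lt ?_ hn⟩
          exact pow_le_pow_of_le_one (by norm_num) (by norm_num) (Nat.le_succ n)
        set N := Nat.find hex with hN
        have hN_lt : c N < d x y := Nat.find_spec hex
        have hone : ∀ n, N ≤ n → g n y = 1 := by
          intro n hn
          apply hg1
          intro hyW
          have h1 : d x y ≤ c n := hWd n y hyF hyW
          have h2 : c n ≤ c N :=
            pow_le_pow_of_le_one (by norm_num) (by norm_num) (by omega)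
          linarith
        -- tail bound
        have htail : (∑' n, c (n + N) * g (n + N) y) = (1/2 : ℝ) ^ N := by
          have : (fun n : ℕ => c (n + N) * g (n + N) y)
              = fun n : ℕ => (1/2 : ℝ) ^ (N + 1) * (1/2 : ℝ) ^ n := by
            funext n
            rw [hone (n + N) (by omega), mul_one]
            simp only [hc]
            ring
          rw [this, tsum_mul_left, tsum_geometric_of_lt_one (by norm_num)
            (by norm_num : (1/2 : ℝ) < 1)]
          norm_num
          ring
        have hsplit := Summable.sum_add_tsum_nat_add N (hterm_sum y)
        have hpart : 0 ≤ ∑ i ∈ Finset.range N, c i * g i y :=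
          Finset.sum_nonneg fun i _ =>
            mul_nonneg (hc_pos i).le (hg01 i y).1
        have hfy : (1/2 : ℝ) ^ N ≤ ∑' n, c n * g n y := by
          rw [← hsplit, htail]
          linarith
        rcases Nat.eq_zero_or_pos N with h0 | hpos
        · rw [h0, pow_zero] at hfy
          exact (min_le_right _ _).trans hfy
        · have hmin := Nat.find_min hex (show N - 1 < N by omega)
          push_neg at hmin
          have : d x y ≤ c (N - 1) := hmin
          have hcN : c (N - 1) = (1/2 : ℝ) ^ N := by
            simp only [hc]
            congr 1
            omega
          rw [hcN] at this
          exact (min_le_left _ _).trans (this.trans hfy)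
  · rintro ⟨f, hf_cont, hfx, hf_ge⟩ ε hε
    have hUo : IsOpen (f ⁻¹' Set.Iio (min ε 1)) := hf_cont.isOpen_preimage _ isOpen_Iio
    refine mem_interior.2 ⟨Subtype.val ⁻¹' (f ⁻¹' Set.Iio (min ε 1)), ?_, ?_, ?_⟩
    · rintro ⟨y, hyF⟩ hy
      have hfy : f y < min ε 1 := hy
      have hmin := hf_ge y hyF
      have h1 : min (d x y) 1 < 1 := lt_of_le_of_lt hmin
        (lt_of_lt_of_le hfy (min_le_right _ _))
      have h2 : min (d x y) 1 = d x y := by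
        rcases min_cases (d x y) 1 with ⟨h, _⟩ | ⟨h, _⟩
        · exact h
        · simp [h] at h1
      have : d x y < ε := by
        have := lt_of_le_of_lt hmin (lt_of_lt_of_le hfy (min_le_left _ _))
        rw [h2] at this; exact this
      exact this.le
    · exact continuous_subtype_val.isOpen_preimage _ hUo
    · show f x < min ε 1
      rw [hfx]
      exact lt_min hε one_pos
end

section
/- Let κ be an infinite cardinal, let X be a compact topological space whose topology has a base of cardinality at most κ, let d : X × X → ℝ be a metric on X, and let ε > 0. Suppose X contains a (>ε)-separated subset (with respect to d) of cardinality κ⁺. Then there exists a nonempty closed set Y ⊆ X such that every nonempty relatively open subset of Y contains a (>ε)-separated subset of cardinality κ⁺. -/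
universe u

/-- If a compact space `X` has a base of cardinality at most `κ` (an infinite cardinal) and
contains a `(>ε)`-separated set of cardinality `κ⁺` for a metric `d`, then there is a nonempty
closed set `Y ⊆ X` all of whose nonempty relatively open subsets contain `(>ε)`-separated
subsets of cardinality `κ⁺`. -/
theorem exists_closed_everywhere_separated {X : Type u} [TopologicalSpace X] [CompactSpace X]
    (κ : Cardinal.{u}) (hκ : Cardinal.aleph0 ≤ κ)
    (hbase : ∃ B : Set (Set X), TopologicalSpace.IsTopologicalBasis B ∧ Cardinal.mk B ≤ κ)
    (d : X → X → ℝ)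
    (h_eq : ∀ x y, d x y = 0 ↔ x = y)
    (h_symm : ∀ x y, d x y = d y x)
    (h_tri : ∀ x y z, d x z ≤ d x y + d y z)
    (ε : ℝ) (hε : 0 < ε)
    (hS : ∃ S : Set X, Cardinal.mk S = Order.succ κ ∧
      ∀ p ∈ S, ∀ q ∈ S, p ≠ q → ε < d p q) :
    ∃ Y : Set X, Y.Nonempty ∧ IsClosed Y ∧
      ∀ U : Set X, IsOpen U → (Y ∩ U).Nonempty →
        ∃ S : Set X, S ⊆ Y ∩ U ∧ Cardinal.mk S = Order.succ κ ∧
          ∀ p ∈ S, ∀ q ∈ S, p ≠ q → ε < d p q := by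
  classical
  obtain ⟨B, hB, hBκ⟩ := hbase
  obtain ⟨S, hScard, hSsep⟩ := hS
  -- separated predicate
  set Sep : Set X → Prop := fun T => ∀ p ∈ T, ∀ q ∈ T, p ≠ q → ε < d p q with hSepDef
  -- bad basic open sets
  set Bad : Set (Set X) := {b | b ∈ B ∧ ¬ ∃ T : Set X, T ⊆ b ∧ Cardinal.mk T = Order.succ κ ∧ Sep T}
    with hBadDef
  set W : Set X := ⋃₀ Bad with hWDef
  have hWopen : IsOpen W := isOpen_sUnion fun b hb => hB.isOpen hb.1
  have hBadκ : Cardinal.mk Bad ≤ κ :=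
    le_trans (Cardinal.mk_le_mk_of_subset fun b hb => hb.1) hBκ
  -- any separated set meets a bad set in ≤ κ points
  have key : ∀ T : Set X, Sep T → ∀ b ∈ Bad, Cardinal.mk (T ∩ b : Set X) ≤ κ := by
    intro T hT b hb
    by_contra h
    push_neg at h
    have h' : Order.succ κ ≤ Cardinal.mk (T ∩ b : Set X) := Order.succ_le_of_lt h
    obtain ⟨P, hPsub, hPcard⟩ := Cardinal.le_mk_iff_exists_subset.mp h'
    exact hb.2 ⟨P, fun x hx => (hPsub hx).2, hPcard,
      fun p hp q hq hpq => hT p (hPsub hp).1 q (hPsub hq).1 hpq⟩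
  -- any separated set meets W in ≤ κ points
  have keyW : ∀ T : Set X, Sep T → Cardinal.mk (T ∩ W : Set X) ≤ κ := by
    intro T hT
    rw [hWDef, Set.sUnion_eq_iUnion, Set.inter_iUnion]
    refine le_trans (Cardinal.mk_iUnion_le _) ?_
    refine le_trans (mul_le_mul' hBadκ (ciSup_le' fun (b : Bad) => key T hT b.1 b.2)) ?_
    exact le_of_eq (Cardinal.mul_eq_self hκ)
  have hsuccκ : Cardinal.aleph0 ≤ Order.succ κ := hκ.trans (Order.le_succ κ)
  -- removing W from a separated set of size κ⁺ keeps size κ⁺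
  have diffW : ∀ T : Set X, Sep T → Cardinal.mk T = Order.succ κ →
      Cardinal.mk (T \ W : Set X) = Order.succ κ := by
    intro T hT hTc
    have h1 : Cardinal.mk (T \ (T ∩ W) : Set X) + Cardinal.mk (T ∩ W : Set X) = Cardinal.mk T :=
      Cardinal.mk_diff_add_mk Set.inter_subset_left
    have h2 : T \ (T ∩ W) = T \ W := Set.diff_self_inter
    rw [h2, hTc] at h1
    have h3 : Cardinal.mk (T ∩ W : Set X) < Order.succ κ :=
      lt_of_le_of_lt (keyW T hT) (Order.lt_succ κ)
    rcases lt_or_ge (Cardinal.mk (T \ W : Set X)) (Order.succ κ) with h4 | h4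
    · exfalso
      have := Cardinal.add_lt_of_lt hsuccκ h4 h3
      rw [h1] at this; exact lt_irrefl _ this
    · refine le_antisymm ?_ h4
      rw [← h1]; exact self_le_add_right _ _
  refine ⟨Wᶜ, ?_, hWopen.isClosed_compl, ?_⟩
  · -- nonempty
    by_contra h
    rw [Set.not_nonempty_iff_eq_empty, Set.compl_empty_iff] at h
    have : Cardinal.mk (S ∩ W : Set X) = Order.succ κ := by
      rw [h, Set.inter_univ, hScard]
    have := (this ▸ keyW S hSsep)
    exact absurd this (not_le_of_gt (Order.lt_succ κ))
  · intro U hU hne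
    obtain ⟨x, hxY, hxU⟩ := hne
    obtain ⟨b, hbB, hxb, hbU⟩ := hB.exists_subset_of_mem_open hxU hU
    have hbGood : b ∉ Bad := fun hb => hxY (Set.mem_sUnion.mpr ⟨b, hb, hxb⟩)
    have : ∃ T : Set X, T ⊆ b ∧ Cardinal.mk T = Order.succ κ ∧ Sep T := by
      by_contra h; exact hbGood ⟨hbB, h⟩
    obtain ⟨T, hTb, hTc, hTsep⟩ := this
    refine ⟨T \ W, ?_, diffW T hTsep hTc, fun p hp q hq hpq => hTsep p hp.1 q hq.1 hpq⟩
    intro y hy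
    exact ⟨hy.2, hbU (hTb hy.1)⟩
end

section
/- Let κ be an infinite cardinal, let X be a compact Hausdorff topological space whose topology has a base of cardinality at most κ, let d : X × X → ℝ be a lower semicontinuous metric on X, and let ε > 0. If X contains a (>ε)-separated subset (with respect to d) of cardinality κ⁺, then there exists a (d,ε)-perfect tree in X. -/
universe u

/-- A `(d,ε)`-perfect tree in a topological space `X`: a family of nonempty closed sets
indexed by finite binary strings such that each child is contained in the interior of its
parent and the two children of each node are at `d`-infimum-distance greater than `ε`. -/
def IsPerfectTree {X : Type u} [TopologicalSpace X] (d : X → X → ℝ) (ε : ℝ)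
    (F : List Bool → Set X) : Prop :=
  (∀ σ, (F σ).Nonempty) ∧ (∀ σ, IsClosed (F σ)) ∧
    (∀ σ (i : Bool), F (σ ++ [i]) ⊆ interior (F σ)) ∧
    (∀ σ, ε < ⨅ (p : F (σ ++ [false])) (q : F (σ ++ [true])), d (p : X) (q : X))

section Aux
variable {X : Type u} [TopologicalSpace X]

/-- Property of a candidate pair of children of `C`. -/
def TreeQ (d : X → X → ℝ) (ε : ℝ) (P : Set X → Prop) (C : Set X) (pr : Set X × Set X) : Prop :=
  P pr.1 ∧ P pr.2 ∧ pr.1 ⊆ interior C ∧ pr.2 ⊆ interior C ∧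
    ε < ⨅ (p : pr.1) (q : pr.2), d (p : X) (q : X)

noncomputable def treeAux (d : X → X → ℝ) (ε : ℝ) (P : Set X → Prop)
    (huniv : P Set.univ)
    (step : ∀ C, P C → ∃ pr : Set X × Set X, TreeQ d ε P C pr) :
    List Bool → {C : Set X // P C}
  | [] => ⟨Set.univ, huniv⟩
  | (false :: l) =>
      ⟨(Classical.choose (step (treeAux d ε P huniv step l).1 (treeAux d ε P huniv step l).2)).1,
        (Classical.choose_spec (step (treeAux d ε P huniv step l).1
          (treeAux d ε P huniv step l).2)).1⟩
  | (true :: l) =>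
      ⟨(Classical.choose (step (treeAux d ε P huniv step l).1 (treeAux d ε P huniv step l).2)).2,
        (Classical.choose_spec (step (treeAux d ε P huniv step l).1
          (treeAux d ε P huniv step l).2)).2.1⟩

lemma treeAux_spec (d : X → X → ℝ) (ε : ℝ) (P : Set X → Prop)
    (huniv : P Set.univ)
    (step : ∀ C, P C → ∃ pr : Set X × Set X, TreeQ d ε P C pr) (l : List Bool) :
    (treeAux d ε P huniv step (false :: l)).1 ⊆ interior (treeAux d ε P huniv step l).1 ∧
    (treeAux d ε P huniv step (true :: l)).1 ⊆ interior (treeAux d ε P huniv step l).1 ∧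
    ε < ⨅ (p : (treeAux d ε P huniv step (false :: l)).1)
        (q : (treeAux d ε P huniv step (true :: l)).1), d (p : X) (q : X) := by
  have spec := Classical.choose_spec (step (treeAux d ε P huniv step l).1
    (treeAux d ε P huniv step l).2)
  exact ⟨spec.2.2.1, spec.2.2.2.1, spec.2.2.2.2⟩

theorem exists_tree_of_step (d : X → X → ℝ) (ε : ℝ) (P : Set X → Prop)
    (hP : ∀ C, P C → IsClosed C ∧ C.Nonempty) (huniv : P Set.univ)
    (step : ∀ C, P C → ∃ pr : Set X × Set X, TreeQ d ε P C pr) :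
    ∃ F : List Bool → Set X, IsPerfectTree d ε F := by
  refine ⟨fun σ => (treeAux d ε P huniv step σ.reverse).1, ?_, ?_, ?_, ?_⟩
  · exact fun σ => (hP _ (treeAux d ε P huniv step σ.reverse).2).2
  · exact fun σ => (hP _ (treeAux d ε P huniv step σ.reverse).2).1
  · intro σ i
    have h : (σ ++ [i]).reverse = i :: σ.reverse := by simp
    show (treeAux d ε P huniv step (σ ++ [i]).reverse).1 ⊆
      interior (treeAux d ε P huniv step σ.reverse).1
    rw [h]
    cases i
    · exact (treeAux_spec d ε P huniv step σ.reverse).1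
    · exact (treeAux_spec d ε P huniv step σ.reverse).2.1
  · intro σ
    have h0 : (σ ++ [false]).reverse = false :: σ.reverse := by simp
    have h1 : (σ ++ [true]).reverse = true :: σ.reverse := by simp
    show ε < ⨅ (p : (treeAux d ε P huniv step (σ ++ [false]).reverse).1)
        (q : (treeAux d ε P huniv step (σ ++ [true]).reverse).1), d (p : X) (q : X)
    rw [h0, h1]
    exact (treeAux_spec d ε P huniv step σ.reverse).2.2

end Aux

/-- If a compact Hausdorff space `X` has a base of cardinality at most `κ` (an infinite
cardinal), `d` is a lower semicontinuous metric on `X`, and `X` contains a `(>ε)`-separated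
set of cardinality `κ⁺`, then there is a `(d,ε)`-perfect tree in `X`. -/
theorem exists_perfect_tree {X : Type u} [TopologicalSpace X] [CompactSpace X] [T2Space X]
    (κ : Cardinal.{u}) (hκ : Cardinal.aleph0 ≤ κ)
    (hbase : ∃ B : Set (Set X), TopologicalSpace.IsTopologicalBasis B ∧ Cardinal.mk B ≤ κ)
    (d : X → X → ℝ)
    (h_eq : ∀ x y, d x y = 0 ↔ x = y)
    (h_symm : ∀ x y, d x y = d y x)
    (h_tri : ∀ x y z, d x z ≤ d x y + d y z)
    (h_lsc : ∀ r : ℝ, IsOpen {p : X × X | r < d p.1 p.2})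
    (ε : ℝ) (hε : 0 < ε)
    (hS : ∃ S : Set X, Cardinal.mk S = Order.succ κ ∧
      ∀ p ∈ S, ∀ q ∈ S, p ≠ q → ε < d p q) :
    ∃ F : List Bool → Set X, IsPerfectTree d ε F := by
  obtain ⟨B, hB, hBcard⟩ := hbase
  obtain ⟨S, hScard, hSsep⟩ := hS
  set T : Set X := {x | x ∈ S ∧ ∀ U ∈ B, x ∈ U → κ < Cardinal.mk ↥(S ∩ U)} with hTdef
  have hTS : T ⊆ S := fun x hx => hx.1
  have hsmall : Cardinal.mk ↥(S \ T) ≤ κ := by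
    have hsub : S \ T ⊆ ⋃ b : {b : Set X // b ∈ B ∧ Cardinal.mk ↥(S ∩ b) ≤ κ}, (S ∩ b.1) := by
      intro x hx
      obtain ⟨hxS, hxT⟩ := hx
      simp only [hTdef, Set.mem_setOf_eq, not_and, not_forall, not_lt] at hxT
      obtain ⟨b, hbB, hxb, hble⟩ := hxT hxS
      exact Set.mem_iUnion.2 ⟨⟨b, hbB, hble⟩, ⟨hxS, hxb⟩⟩
    have h1 : Cardinal.mk {b : Set X // b ∈ B ∧ Cardinal.mk ↥(S ∩ b) ≤ κ} ≤ κ := by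
      refine le_trans ?_ hBcard
      exact Cardinal.mk_le_mk_of_subset (fun b hb => hb.1)
    calc Cardinal.mk ↥(S \ T)
        ≤ Cardinal.mk ↥(⋃ b : {b : Set X // b ∈ B ∧ Cardinal.mk ↥(S ∩ b) ≤ κ}, (S ∩ b.1)) :=
          Cardinal.mk_le_mk_of_subset hsub
      _ ≤ Cardinal.mk {b : Set X // b ∈ B ∧ Cardinal.mk ↥(S ∩ b) ≤ κ} *
            ⨆ b : {b : Set X // b ∈ B ∧ Cardinal.mk ↥(S ∩ b) ≤ κ}, Cardinal.mk ↥(S ∩ b.1) :=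
          Cardinal.mk_iUnion_le _
      _ ≤ κ * κ := mul_le_mul' h1 (ciSup_le' fun b => b.2.2)
      _ = κ := Cardinal.mul_eq_self hκ
  have hTbig : ∀ U : Set X, IsOpen U → ∀ x ∈ T, x ∈ U → κ < Cardinal.mk ↥(T ∩ U) := by
    intro U hU x hxT hxU
    obtain ⟨b, hbB, hxb, hbU⟩ := hB.exists_subset_of_mem_open hxU hU
    have hSb : κ < Cardinal.mk ↥(S ∩ b) := hxT.2 b hbB hxb
    have hTb : κ < Cardinal.mk ↥(T ∩ b) := by
      by_contra h
      push_neg at h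
      have hsub2 : S ∩ b ⊆ (T ∩ b) ∪ (S \ T) := by
        intro y ⟨hyS, hyb⟩
        by_cases hyT : y ∈ T
        · exact Or.inl ⟨hyT, hyb⟩
        · exact Or.inr ⟨hyS, hyT⟩
      have := calc Cardinal.mk ↥(S ∩ b) ≤ Cardinal.mk ↥((T ∩ b) ∪ (S \ T)) :=
              Cardinal.mk_le_mk_of_subset hsub2
        _ ≤ Cardinal.mk ↥(T ∩ b) + Cardinal.mk ↥(S \ T) := Cardinal.mk_union_le _ _
        _ ≤ κ + κ := add_le_add h hsmall
        _ = κ := Cardinal.add_eq_self hκ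
      exact absurd this hSb.not_ge
    exact lt_of_lt_of_le hTb (Cardinal.mk_le_mk_of_subset (Set.inter_subset_inter_right T hbU))
  have hTne : T.Nonempty := by
    by_contra hne
    rw [Set.not_nonempty_iff_eq_empty] at hne
    have : Cardinal.mk ↥S ≤ κ := by
      refine le_trans (Cardinal.mk_le_mk_of_subset (fun x hx => ?_)) hsmall
      exact ⟨hx, by simp [hne]⟩
    rw [hScard] at this
    exact absurd this (Order.lt_succ κ).not_ge
  -- the invariant for the tree construction
  set P : Set X → Prop := fun C => IsClosed C ∧ ∃ t ∈ T, t ∈ interior C with hPdef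
  have hP : ∀ C, P C → IsClosed C ∧ C.Nonempty := by
    rintro C ⟨hc, t, _, ht⟩
    exact ⟨hc, t, interior_subset ht⟩
  have huniv : P Set.univ := ⟨isClosed_univ, hTne.choose, hTne.choose_spec, by simp⟩
  have step : ∀ C, P C → ∃ pr : Set X × Set X, TreeQ d ε P C pr := by
    rintro C ⟨hCc, t, htT, htI⟩
    have hbig : κ < Cardinal.mk ↥(T ∩ interior C) := hTbig _ isOpen_interior t htT htI
    have hnt : Nontrivial ↥(T ∩ interior C) := by
      rw [← Cardinal.one_lt_iff_nontrivial]
      exact lt_of_le_of_lt (le_trans Cardinal.one_lt_aleph0.le hκ) hbig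
    obtain ⟨⟨p, hpT, hpI⟩, ⟨q, hqT, hqI⟩, hne⟩ := hnt.exists_pair_ne
    have hpq : p ≠ q := fun h => hne (Subtype.ext h)
    have hdpq : ε < d p q := hSsep p (hTS hpT) q (hTS hqT) hpq
    set δ : ℝ := (ε + d p q) / 2 with hδdef
    have hεδ : ε < δ := by rw [hδdef]; linarith
    have hδd : δ < d p q := by rw [hδdef]; linarith
    have hmem : {z : X × X | δ < d z.1 z.2} ∈ nhds (p, q) := (h_lsc δ).mem_nhds hδd
    obtain ⟨u, hu, v, hv, huv⟩ := mem_nhds_prod_iff.1 hmem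
    have hu' : u ∩ interior C ∈ nhds p := Filter.inter_mem hu (isOpen_interior.mem_nhds hpI)
    have hv' : v ∩ interior C ∈ nhds q := Filter.inter_mem hv (isOpen_interior.mem_nhds hqI)
    obtain ⟨C0, hC0n, hC0c, hC0s⟩ := exists_mem_nhds_isClosed_subset hu'
    obtain ⟨C1, hC1n, hC1c, hC1s⟩ := exists_mem_nhds_isClosed_subset hv'
    haveI hne0 : Nonempty ↥C0 := ⟨⟨p, mem_of_mem_nhds hC0n⟩⟩
    haveI hne1 : Nonempty ↥C1 := ⟨⟨q, mem_of_mem_nhds hC1n⟩⟩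
    refine ⟨(C0, C1), ⟨hC0c, p, hpT, mem_interior_iff_mem_nhds.2 hC0n⟩,
      ⟨hC1c, q, hqT, mem_interior_iff_mem_nhds.2 hC1n⟩,
      hC0s.trans Set.inter_subset_right, hC1s.trans Set.inter_subset_right, ?_⟩
    refine lt_of_lt_of_le hεδ (le_ciInf fun x => le_ciInf fun y => le_of_lt ?_)
    exact huv (show ((x : X), (y : X)) ∈ u ×ˢ v from ⟨(hC0s x.2).1, (hC1s y.2).1⟩)
  exact exists_tree_of_step d ε P hP huniv step
end

section
/- Let X be a compact topological space, let Φ be a family of continuous functions from X to [0,1], and define d_Φ(p,q) = sup{|f(p) − f(q)| : f ∈ Φ} for p, q ∈ X. Let ε > 0 and suppose (F_σ)_{σ ∈ 2^{<ω}} is a (d_Φ,ε)-perfect tree in X. Then there exists a countable subfamily Φ₀ ⊆ Φ such that (F_σ)_{σ ∈ 2^{<ω}} is a (d_{Φ₀},ε)-perfect tree in X, where d_{Φ₀}(p,q) = sup{|f(p) − f(q)| : f ∈ Φ₀}. -/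
set_option maxHeartbeats 1000000


universe u

/-- If `Φ` is a family of continuous `[0,1]`-valued functions on a compact space `X` and a
family of closed sets is a perfect tree for the pseudometric
`d_Φ(p,q) = sup {|f p − f q| : f ∈ Φ}`, then some countable subfamily `Φ₀ ⊆ Φ` already yields
a perfect tree for `d_{Φ₀}`. -/
theorem perfect_tree_countable_subfamily {X : Type u} [TopologicalSpace X] [CompactSpace X]
    (Φ : Set (X → ℝ)) (hΦc : ∀ f ∈ Φ, Continuous f)
    (hΦb : ∀ f ∈ Φ, ∀ x : X, f x ∈ Set.Icc (0 : ℝ) 1)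
    (ε : ℝ) (hε : 0 < ε)
    (F : List Bool → Set X)
    (hF : IsPerfectTree (fun p q => ⨆ f : Φ, |(f : X → ℝ) p - (f : X → ℝ) q|) ε F) :
    ∃ Φ₀ : Set (X → ℝ), Φ₀ ⊆ Φ ∧ Φ₀.Countable ∧
      IsPerfectTree (fun p q => ⨆ f : Φ₀, |(f : X → ℝ) p - (f : X → ℝ) q|) ε F := by
  obtain ⟨hne, hcl, hsub, hinf⟩ := hF
  set d : X → X → ℝ := fun p q => ⨆ f : Φ, |(f : X → ℝ) p - (f : X → ℝ) q| with hd
  -- boundedness of sups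
  have hbdd : ∀ (S : Set (X → ℝ)), S ⊆ Φ → ∀ p q : X,
      BddAbove (Set.range fun f : S => |(f : X → ℝ) p - (f : X → ℝ) q|) := by
    intro S hS p q
    refine ⟨1, ?_⟩
    rintro _ ⟨f, rfl⟩
    have h1 := hΦb f (hS f.2) p
    have h2 := hΦb f (hS f.2) q
    rw [abs_sub_le_iff]
    constructor <;> linarith [h1.1, h1.2, h2.1, h2.2]
  have hd0 : ∀ p q : X, 0 ≤ d p q := fun p q => Real.iSup_nonneg fun f => abs_nonneg _
  -- thresholds
  set c : List Bool → ℝ := fun σ =>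
    (ε + ⨅ (p : F (σ ++ [false])) (q : F (σ ++ [true])), d (p : X) (q : X)) / 2 with hcdef
  have hεc : ∀ σ, ε < c σ := fun σ => by
    have := hinf σ; simp only [hcdef]; linarith
  have hc : ∀ σ, ∀ p ∈ F (σ ++ [false]), ∀ q ∈ F (σ ++ [true]), c σ < d p q := by
    intro σ p hp q hq
    have hlt := hinf σ
    have hinst1 : Nonempty (F (σ ++ [false])) := (hne _).to_subtype
    have hinst2 : Nonempty (F (σ ++ [true])) := (hne _).to_subtype
    have h1 : (⨅ (p' : F (σ ++ [false])) (q' : F (σ ++ [true])), d (p' : X) (q' : X)) ≤ d p q := by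
      calc (⨅ (p' : F (σ ++ [false])) (q' : F (σ ++ [true])), d (p' : X) (q' : X))
          ≤ ⨅ (q' : F (σ ++ [true])), d p (q' : X) := by
            refine ciInf_le ⟨0, ?_⟩ (⟨p, hp⟩ : F (σ ++ [false]))
            rintro _ ⟨p', rfl⟩
            exact le_ciInf fun q' => hd0 _ _
        _ ≤ d p q := by
            refine ciInf_le ⟨0, ?_⟩ (⟨q, hq⟩ : F (σ ++ [true]))
            rintro _ ⟨q', rfl⟩
            exact hd0 _ _
    simp only [hcdef]; linarith
  -- per σ: exists f in Φ witnessing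
  have hwit : ∀ σ, ∀ p ∈ F (σ ++ [false]), ∀ q ∈ F (σ ++ [true]),
      ∃ f : Φ, c σ < |(f : X → ℝ) p - (f : X → ℝ) q| := by
    intro σ p hp q hq
    have h := hc σ p hp q hq
    have hΦne : Nonempty Φ := by
      by_contra h'
      have : IsEmpty ↥Φ := not_nonempty_iff.mp h'
      have : d p q = 0 := Real.iSup_of_isEmpty _
      have := hεc σ
      linarith
    exact exists_lt_of_lt_ciSup h
  -- compactness: for each σ, finite subcover
  have hcover : ∀ σ, ∃ t : Finset Φ, ∀ p ∈ F (σ ++ [false]), ∀ q ∈ F (σ ++ [true]),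
      ∃ f ∈ t, c σ < |(f : X → ℝ) p - (f : X → ℝ) q| := by
    intro σ
    set K : Set (X × X) := F (σ ++ [false]) ×ˢ F (σ ++ [true]) with hK
    have hKc : IsCompact K := ((hcl _).isCompact).prod ((hcl _).isCompact)
    set U : Φ → Set (X × X) := fun f => {x | c σ < |(f : X → ℝ) x.1 - (f : X → ℝ) x.2|} with hU
    have hUo : ∀ f : Φ, IsOpen (U f) := by
      intro f
      have hcont : Continuous fun x : X × X => |(f : X → ℝ) x.1 - (f : X → ℝ) x.2| :=
        (((hΦc f f.2).comp continuous_fst).sub ((hΦc f f.2).comp continuous_snd)).abs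
      exact isOpen_lt continuous_const hcont
    have hKU : K ⊆ ⋃ f : Φ, U f := by
      rintro ⟨p, q⟩ ⟨hp, hq⟩
      obtain ⟨f, hf⟩ := hwit σ p hp q hq
      exact Set.mem_iUnion.mpr ⟨f, hf⟩
    obtain ⟨t, ht⟩ := hKc.elim_finite_subcover U hUo hKU
    refine ⟨t, fun p hp q hq => ?_⟩
    have hx := ht (Set.mk_mem_prod hp hq)
    obtain ⟨f, hf, hxU⟩ := Set.mem_iUnion₂.mp hx
    exact ⟨f, hf, hxU⟩
  choose t ht using hcover
  refine ⟨(fun f : Φ => (f : X → ℝ)) '' (⋃ σ, (t σ : Set Φ)), ?_, ?_, ?_, ?_, ?_, ?_⟩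
  · rintro _ ⟨f, _, rfl⟩; exact f.2
  · exact (Set.countable_iUnion fun σ => (t σ).countable_toSet).image _
  · exact hne
  · exact hcl
  · exact hsub
  · intro σ
    set Φ₀ : Set (X → ℝ) := (fun f : Φ => (f : X → ℝ)) '' (⋃ σ, (t σ : Set Φ)) with hΦ₀
    have hΦ₀sub : Φ₀ ⊆ Φ := by rintro _ ⟨f, _, rfl⟩; exact f.2
    have hinst1 : Nonempty (F (σ ++ [false])) := (hne _).to_subtype
    have hinst2 : Nonempty (F (σ ++ [true])) := (hne _).to_subtype
    have key : ∀ (p : F (σ ++ [false])) (q : F (σ ++ [true])),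
        c σ ≤ ⨆ f : Φ₀, |(f : X → ℝ) (p : X) - (f : X → ℝ) (q : X)| := by
      rintro ⟨p, hp⟩ ⟨q, hq⟩
      obtain ⟨f, hft, hflt⟩ := ht σ p hp q hq
      have hfmem : (f : X → ℝ) ∈ Φ₀ := ⟨f, Set.mem_iUnion.mpr ⟨σ, hft⟩, rfl⟩
      have := le_ciSup (hbdd Φ₀ hΦ₀sub p q) (⟨(f : X → ℝ), hfmem⟩ : Φ₀)
      exact le_trans hflt.le this
    have : c σ ≤ ⨅ (p : F (σ ++ [false])) (q : F (σ ++ [true])),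
        ⨆ f : Φ₀, |(f : X → ℝ) (p : X) - (f : X → ℝ) (q : X)| :=
      le_ciInf fun p => le_ciInf fun q => key p q
    exact lt_of_lt_of_le (hεc σ) this
end

section
/- Let X be a compact Hausdorff topological space whose topology has a countable base, let d : X × X → ℝ be a lower semicontinuous metric on X, and let ε > 0. If X contains an uncountable (>ε)-separated subset with respect to d, then X contains a (>ε)-separated subset of cardinality 2^{ℵ₀}. -/
universe u

open Set Topology

/-- If a compact Hausdorff second countable space carries a lower semicontinuous metric `d`
and contains an uncountable `(>ε)`-separated subset, then it contains a `(>ε)`-separated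
subset of cardinality `2^ℵ₀`. -/
theorem separated_continuum_of_uncountable {X : Type u} [TopologicalSpace X] [CompactSpace X]
    [T2Space X] [SecondCountableTopology X]
    (d : X → X → ℝ)
    (h_eq : ∀ x y, d x y = 0 ↔ x = y)
    (h_symm : ∀ x y, d x y = d y x)
    (h_tri : ∀ x y z, d x z ≤ d x y + d y z)
    (h_lsc : ∀ r : ℝ, IsOpen {p : X × X | r < d p.1 p.2})
    (ε : ℝ) (hε : 0 < ε)
    (hS : ∃ S : Set X, ¬S.Countable ∧ ∀ p ∈ S, ∀ q ∈ S, p ≠ q → ε < d p q) :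
    ∃ S : Set X, Cardinal.mk S = Cardinal.continuum ∧
      ∀ p ∈ S, ∀ q ∈ S, p ≠ q → ε < d p q := by
  classical
  obtain ⟨S, hSunc, hSsep⟩ := hS
  set B := TopologicalSpace.countableBasis X with hBdef
  have hBbasis := TopologicalSpace.isBasis_countableBasis X
  have hBcount : B.Countable := TopologicalSpace.countable_countableBasis X
  set S' : Set X := {x ∈ S | ∀ t ∈ B, x ∈ t → ¬(S ∩ t).Countable} with hS'def
  -- the set of non-condensation points of `S` is countable
  have hdiff : (S \ S').Countable := by
    have hsub : S \ S' ⊆ ⋃ t ∈ {t ∈ B | (S ∩ t).Countable}, S ∩ t := by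
      rintro x ⟨hxS, hx⟩
      have : ¬(∀ t ∈ B, x ∈ t → ¬(S ∩ t).Countable) := fun h => hx ⟨hxS, h⟩
      push_neg at this
      obtain ⟨t, htB, hxt, hc⟩ := this
      exact mem_biUnion ⟨htB, hc⟩ ⟨hxS, hxt⟩
    exact Countable.mono hsub <| Countable.biUnion (hBcount.mono (sep_subset _ _))
      (fun t ht => ht.2)
  have hS'unc : ¬S'.Countable := by
    intro h
    exact hSunc <| (h.union hdiff).mono (fun x hx => by
      by_cases hx' : x ∈ S'
      · exact mem_union_left _ hx'
      · exact mem_union_right _ ⟨hx, hx'⟩)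
  have hS'ne : S'.Nonempty := by
    rcases S'.eq_empty_or_nonempty with h | h
    · exact absurd (h ▸ countable_empty) hS'unc
    · exact h
  have hS'S : S' ⊆ S := fun x hx => hx.1
  -- every open set meeting `S'` contains two distinct points of `S'`
  have htwo : ∀ U : Set X, IsOpen U → ∀ x ∈ U ∩ S', (U ∩ S').Nontrivial := by
    intro U hU x ⟨hxU, hxS'⟩
    obtain ⟨t, htB, hxt, htU⟩ := hBbasis.exists_subset_of_mem_open hxU hU
    have htunc : ¬(S ∩ t).Countable := hxS'.2 t htB hxt
    have : ¬(S' ∩ t).Countable := by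
      intro h
      exact htunc <| (h.union hdiff).mono (fun y ⟨hyS, hyt⟩ => by
        by_cases hy' : y ∈ S'
        · exact mem_union_left _ ⟨hy', hyt⟩
        · exact mem_union_right _ ⟨hyS, hy'⟩)
    have hnt : (S' ∩ t).Nontrivial := by
      by_contra h
      rw [not_nontrivial_iff] at h
      exact this h.countable
    obtain ⟨a, ha, b, hb, hab⟩ := hnt
    exact ⟨a, ⟨htU ha.2, ha.1⟩, b, ⟨htU hb.2, hb.1⟩, hab⟩
  -- the splitting step
  have step : ∀ U : Set X, IsOpen U → (U ∩ S').Nonempty →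
      ∃ V : Set X, ∃ W : Set X, (IsOpen V ∧ (V ∩ S').Nonempty) ∧
        (IsOpen W ∧ (W ∩ S').Nonempty) ∧ closure V ⊆ U ∧ closure W ⊆ U ∧
        ∀ x ∈ closure V, ∀ y ∈ closure W, ε < d x y := by
    intro U hU ⟨x, hx⟩
    obtain ⟨a, ⟨haU, haS'⟩, b, ⟨hbU, hbS'⟩, hab⟩ := htwo U hU x hx
    have hdab : ε < d a b := hSsep a (hS'S haS') b (hS'S hbS') hab
    have hR : ((a, b) : X × X) ∈ {p : X × X | ε < d p.1 p.2} := hdab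
    obtain ⟨u, v, hu, hv, hau, hbv, huv⟩ := (isOpen_prod_iff).1 (h_lsc ε) a b hR
    -- shrink with regularity
    obtain ⟨tV, htVmem, htVcl, htVsub⟩ :=
      exists_mem_nhds_isClosed_subset ((hu.inter hU).mem_nhds ⟨hau, haU⟩)
    obtain ⟨tW, htWmem, htWcl, htWsub⟩ :=
      exists_mem_nhds_isClosed_subset ((hv.inter hU).mem_nhds ⟨hbv, hbU⟩)
    refine ⟨interior tV, interior tW, ⟨isOpen_interior, ⟨a, mem_interior_iff_mem_nhds.2 htVmem, haS'⟩⟩,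
      ⟨isOpen_interior, ⟨b, mem_interior_iff_mem_nhds.2 htWmem, hbS'⟩⟩, ?_, ?_, ?_⟩
    · exact (closure_minimal interior_subset htVcl).trans (htVsub.trans (inter_subset_right))
    · exact (closure_minimal interior_subset htWcl).trans (htWsub.trans (inter_subset_right))
    · intro p hp q hq
      have hp' : p ∈ u := (htVsub ((closure_minimal interior_subset htVcl) hp)).1
      have hq' : q ∈ v := (htWsub ((closure_minimal interior_subset htWcl) hq)).1
      exact huv (Set.mk_mem_prod hp' hq')
  choose! V W hV hW hVU hWU hcross using step
  -- the Cantor scheme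
  set g : (ℕ → Bool) → ℕ → Set X := fun α n =>
    Nat.rec Set.univ (fun k U => cond (α k) (W U) (V U)) n with hgdef
  have hg0 : ∀ α, g α 0 = Set.univ := fun _ => rfl
  have hgsucc : ∀ α n, g α (n + 1) = cond (α n) (W (g α n)) (V (g α n)) := fun _ _ => rfl
  have hP : ∀ α n, IsOpen (g α n) ∧ (g α n ∩ S').Nonempty := by
    intro α n
    induction n with
    | zero => exact ⟨isOpen_univ, hS'ne.imp (fun x hx => ⟨mem_univ x, hx⟩)⟩
    | succ n ih =>
      rw [hgsucc]
      cases α n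
      · exact ⟨(hV _ ih.1 ih.2).1, (hV _ ih.1 ih.2).2⟩
      · exact ⟨(hW _ ih.1 ih.2).1, (hW _ ih.1 ih.2).2⟩
  have hnest : ∀ α n, closure (g α (n + 1)) ⊆ g α n := by
    intro α n
    rw [hgsucc]
    cases α n
    · exact hVU _ (hP α n).1 (hP α n).2
    · exact hWU _ (hP α n).1 (hP α n).2
  -- pick a point in each branch
  have hbranch : ∀ α : ℕ → Bool, (⋂ n, closure (g α n)).Nonempty := by
    intro α
    apply IsCompact.nonempty_iInter_of_sequence_nonempty_isCompact_isClosed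
    · intro n
      exact (hnest α n).trans subset_closure
    · intro n
      exact (hP α n).2.imp (fun x hx => subset_closure hx.1)
    · exact isClosed_closure.isCompact
    · intro n; exact isClosed_closure
  choose f hf using hbranch
  have hfmem : ∀ α n, f α ∈ closure (g α n) := by
    intro α n
    exact mem_iInter.1 (hf α) n
  -- prefix lemma
  have hpre : ∀ n (α β : ℕ → Bool), (∀ k < n, α k = β k) → g α n = g β n := by
    intro n
    induction n with
    | zero => intro α β _; rfl
    | succ n ih =>
      intro α β h
      rw [hgsucc, hgsucc, ih α β (fun k hk => h k (hk.trans (Nat.lt_succ_self n))),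
        h n (Nat.lt_succ_self n)]
  -- separation of the branches
  have hsep : ∀ α β : ℕ → Bool, α ≠ β → ε < d (f α) (f β) := by
    intro α β hne
    have hex : ∃ n, α n ≠ β n := Function.ne_iff.1 hne
    set n := Nat.find hex with hn
    have hmin : ∀ k < n, α k = β k := fun k hk => by
      have := Nat.find_min hex hk
      exact not_not.1 this
    have hgn : g α n = g β n := hpre n α β hmin
    have hαmem : f α ∈ closure (g α (n + 1)) := hfmem α (n + 1)
    have hβmem : f β ∈ closure (g β (n + 1)) := hfmem β (n + 1)
    rw [hgsucc] at hαmem hβmem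
    rw [← hgn] at hβmem
    have hPn := hP α n
    rcases hαb : α n with _ | _ <;> rcases hβb : β n with _ | _
    · exact absurd (hαb.trans hβb.symm) (Nat.find_spec hex)
    · rw [hαb] at hαmem; rw [hβb] at hβmem
      exact hcross _ hPn.1 hPn.2 (f α) hαmem (f β) hβmem
    · rw [hαb] at hαmem; rw [hβb] at hβmem
      rw [h_symm]
      exact hcross _ hPn.1 hPn.2 (f β) hβmem (f α) hαmem
    · exact absurd (hαb.trans hβb.symm) (Nat.find_spec hex)
  have hinj : Function.Injective f := by
    intro α β h
    by_contra hne
    have := hsep α β hne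
    rw [h, (h_eq (f β) (f β)).2 rfl] at this
    exact absurd (hε.trans this) (lt_irrefl 0)
  refine ⟨Set.range f, ?_, ?_⟩
  · have h1 : Cardinal.lift.{u} (Cardinal.mk (ℕ → Bool)) =
        Cardinal.lift.{0} (Cardinal.mk (Set.range f)) :=
      (Cardinal.lift_mk_eq').2 ⟨Equiv.ofInjective f hinj⟩
    have h2 : Cardinal.mk (ℕ → Bool) = Cardinal.continuum := by
      rw [← Cardinal.two_power_aleph0]
      simp [Cardinal.power_def]
    rw [h2, Cardinal.lift_continuum] at h1
    simpa using h1.symm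
  · rintro p ⟨α, rfl⟩ q ⟨β, rfl⟩ hpq
    exact hsep α β (fun h => hpq (h ▸ rfl))
end
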